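/- arXiv:1608.05525 — 3 statements merged into one kernel-verified Lean document; each statement's English description precedes it below -/
import Mathlib

section
/- Let λ be a primitive q-th root of unity in ℂ with q odd, and let k be a positive integer coprime with q. Then the product of δ_{k-1}(λ^{2j-1}) over all j with 1 ≤ j ≤ q and j ≠ (q+1)/2 equals 1, where δ_{k-1}(b) = 1 + b + ... + b^{k-1}. -/
/-- δ_k(b) = 1 + b + ... + b^k -/
noncomputable def delta (k : ℕ) (b : ℂ) : ℂ := ∑ i ∈ Finset.range (k + 1), b ^ i

/-!
For `1 ≤ j ≤ q` the exponents `2j - 1` run through all residues mod `q` (as `2` is invertible),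
and `j = (q + 1) / 2` is the one giving residue `0`; so the product is `∏ δ_{k-1}(z)` over the
`q`-th roots of unity `z ≠ 1`. Multiplying by `∏ (z - 1) ≠ 0` turns it into `∏ (z^k - 1)`,
and `z ↦ z^k` permutes these roots because `k` is coprime to `q`.
-/

open Finset Polynomial

theorem delta_mul_sub_one (k : ℕ) (b : ℂ) : delta k b * (b - 1) = b ^ (k + 1) - 1 :=
  geom_sum_mul b (k + 1)

theorem Finset.prod_comp_of_injOn_of_card_le {ι κ M : Type*} [CommMonoid M] {s : Finset ι}
    {t : Finset κ} {e : ι → κ} (hmaps : Set.MapsTo e s t) (hinj : Set.InjOn e s)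
    (hcard : #t ≤ #s) (f : κ → M) : ∏ i ∈ s, f (e i) = ∏ j ∈ t, f j := by
  classical
  rw [← prod_image hinj]
  congr 1
  exact eq_of_subset_of_card_le (image_subset_iff.2 hmaps)
    (hcard.trans (card_image_of_injOn hinj).ge)

theorem IsPrimitiveRoot.prod_pow_two_mul_sub_one {R M : Type*} [CommRing R] [IsDomain R]
    [DecidableEq R] [CommMonoid M] {ζ : R} {q : ℕ} (hζ : IsPrimitiveRoot ζ q) (hq : Odd q)
    (f : R → M) :
    ∏ j ∈ (Icc 1 q).erase ((q + 1) / 2), f (ζ ^ (2 * j - 1)) =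
      ∏ z ∈ (nthRootsFinset q (1 : R)).erase 1, f z := by
  have hq0 := hq.pos
  refine prod_comp_of_injOn_of_card_le (fun j hj => ?_) (fun a ha b hb hab => ?_) ?_ f
  · simp only [coe_erase, coe_Icc, Set.mem_sdiff, Set.mem_Icc, Set.mem_singleton_iff] at hj
    refine mem_erase.2 ⟨?_, (Polynomial.mem_nthRootsFinset hq0 1).2 ?_⟩
    · rw [Ne, hζ.pow_eq_one_iff_dvd]
      intro hdvd
      have h_eq : 2 * j - 1 = q := Nat.eq_of_dvd_of_lt_two_mul (by omega) hdvd (by omega)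
      obtain ⟨m, rfl⟩ := hq
      omega
    · rw [← pow_mul, mul_comm, pow_mul, hζ.pow_eq_one, one_pow]
  · simp only [coe_erase, coe_Icc, Set.mem_sdiff, Set.mem_Icc] at ha hb
    have h2 : 2 * a ≡ 2 * b [MOD q] := by
      have := ((hζ.isOfFinOrder hq0.ne').pow_eq_pow_iff_modEq.1 hab).add_right 1
      rw [← hζ.eq_orderOf] at this
      rwa [Nat.sub_add_cancel (by omega), Nat.sub_add_cancel (by omega)] at this
    refine (Nat.ModEq.cancel_left_of_coprime hq.coprime_two_right h2).eq_of_abs_lt ?_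
    rw [abs_lt]
    omega
  · rw [card_erase_of_mem (one_mem_nthRootsFinset hq0), hζ.card_nthRootsFinset,
      card_erase_of_mem (mem_Icc.2 ⟨by omega, by omega⟩), Nat.card_Icc]
    omega

theorem prod_pow_nthRootsFinset_erase_one {K M : Type*} [Field K] [DecidableEq K] [CommMonoid M]
    {q k : ℕ} (hq : 0 < q) (hkq : k.Coprime q) (f : K → M) :
    ∏ z ∈ (nthRootsFinset q (1 : K)).erase 1, f (z ^ k) =
      ∏ z ∈ (nthRootsFinset q (1 : K)).erase 1, f z := by
  have eq_one {x : K} (hk : x ^ k = 1) (hq : x ^ q = 1) : x = 1 := by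
    simpa [hkq] using pow_gcd_eq_one.2 ⟨hk, hq⟩
  refine prod_comp_of_injOn_of_card_le (fun z hz => ?_) (fun z hz w hw hzw => ?_) le_rfl f
  · simp only [coe_erase, Set.mem_sdiff, mem_coe, mem_nthRootsFinset hq,
      Set.mem_singleton_iff] at hz
    refine mem_erase.2 ⟨fun h => hz.2 (eq_one h hz.1), (mem_nthRootsFinset hq 1).2 ?_⟩
    rw [← pow_mul, mul_comm, pow_mul, hz.1, one_pow]
  · have hw0 : w ≠ 0 := ne_zero_of_mem_nthRootsFinset one_ne_zero (mem_of_mem_erase hw)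
    simp only [coe_erase, Set.mem_sdiff, mem_coe, mem_nthRootsFinset hq] at hz hw
    refine (div_eq_one_iff_eq hw0).1 (eq_one ?_ ?_)
    · rw [div_pow, hzw, div_self (pow_ne_zero _ hw0)]
    · rw [div_pow, hz.1, hw.1, div_one]

theorem prod_delta_nthRootsFinset_erase_one {q k : ℕ} (hq : 0 < q) (hk : 0 < k)
    (hkq : k.Coprime q) : ∏ z ∈ (nthRootsFinset q (1 : ℂ)).erase 1, delta (k - 1) z = 1 := by
  have hP : ∏ z ∈ (nthRootsFinset q (1 : ℂ)).erase 1, (z - 1) ≠ 0 :=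
    prod_ne_zero_iff.2 fun z hz => sub_ne_zero.2 (ne_of_mem_erase hz)
  refine mul_right_cancel₀ hP ?_
  calc (∏ z ∈ (nthRootsFinset q (1 : ℂ)).erase 1, delta (k - 1) z) *
        ∏ z ∈ (nthRootsFinset q (1 : ℂ)).erase 1, (z - 1)
      = ∏ z ∈ (nthRootsFinset q (1 : ℂ)).erase 1, (z ^ k - 1) := by
        rw [← prod_mul_distrib]
        refine prod_congr rfl fun z _ => ?_
        rw [delta_mul_sub_one, Nat.sub_add_cancel hk]
    _ = 1 * ∏ z ∈ (nthRootsFinset q (1 : ℂ)).erase 1, (z - 1) := by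
        rw [one_mul, prod_pow_nthRootsFinset_erase_one hq hkq (· - 1)]

theorem prod_delta_eq_one_general (q k : ℕ) (hq : Odd q)
    (hk : 0 < k) (hkq : Nat.Coprime k q) (lam : ℂ) (hlam : IsPrimitiveRoot lam q) :
    ∏ j ∈ (Finset.Icc 1 q).erase ((q + 1) / 2), delta (k - 1) (lam ^ (2 * j - 1)) = 1 := by
  rw [hlam.prod_pow_two_mul_sub_one hq (delta (k - 1))]
  exact prod_delta_nthRootsFinset_erase_one hq.pos hk hkq

theorem prod_delta_eq_one (q k : ℕ) (hq : Odd q) (hq1 : 0 < q)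
    (hk : 0 < k) (hkq : Nat.Coprime k q) (lam : ℂ) (hlam : IsPrimitiveRoot lam q) :
    ∏ j ∈ (Finset.Icc 1 q).erase ((q + 1) / 2), delta (k - 1) (lam ^ (2 * j - 1)) = 1 :=
  prod_delta_eq_one_general q k hq hk hkq lam hlam
end

section
/- Let a ∈ ℂ satisfy a^{4mn−1} = 1, where m, n are positive integers. Then (a^m + a^{1−4mn})(a^{2mn} + 1) · δ_{m−1}(a) · δ_{n−1}(a^{2m}) = δ_{4mn−1}(a), where δ_k(b) = 1 + b + ... + b^k. -/
/-!
Once `a ^ (1 - 4mn) = 1`, the left side is `(1 + a^m) (1 + a^{2mn}) δ_{m-1}(a) δ_{n-1}(a^{2m})`,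
and the identity `∑_{i<kl} x^i = (∑_{i<k} x^i) (∑_{j<l} x^{kj})` collapses it in three steps:
`m ↦ 2m` (with `l = 2`), `2m ↦ 2mn` (with `l = n`) and `2mn ↦ 4mn` (with `l = 2`).
-/

open Finset

theorem geom_sum_mul_geom_sum_pow {R : Type*} [Semiring R] (x : R) (k l : ℕ) :
    (∑ i ∈ range k, x ^ i) * ∑ j ∈ range l, (x ^ k) ^ j = ∑ i ∈ range (k * l), x ^ i := by
  induction l with
  | zero => simp
  | succ l ih =>
    rw [sum_range_succ, mul_add, ih, Nat.mul_succ, sum_range_add, sum_mul]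
    congr 1
    refine sum_congr rfl fun i _ => ?_
    rw [← pow_mul, ← pow_add, Nat.add_comm]

theorem geom_sum_mul_pow_add_one {R : Type*} [Semiring R] (x : R) (k : ℕ) :
    (∑ i ∈ range k, x ^ i) * (x ^ k + 1) = ∑ i ∈ range (2 * k), x ^ i := by
  rw [← geom_sum_two, geom_sum_mul_geom_sum_pow, Nat.mul_comm]

theorem zpow_one_sub_natCast_eq_one {G : Type*} [DivisionMonoid G] {a : G} {N : ℕ}
    (hN : 0 < N) (ha : a ^ (N - 1) = 1) : a ^ (1 - (N : ℤ)) = 1 := by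
  rw [show 1 - (N : ℤ) = -((N - 1 : ℕ) : ℤ) by omega, zpow_neg, zpow_natCast, ha, inv_one]

theorem delta_telescoping (m n : ℕ) (hm : 0 < m) (hn : 0 < n) (a : ℂ)
    (ha : a ^ (4 * m * n - 1) = 1) :
    (a ^ m + a ^ (1 - 4 * (m : ℤ) * n)) * (a ^ (2 * m * n) + 1) *
        delta (m - 1) a * delta (n - 1) (a ^ (2 * m)) = delta (4 * m * n - 1) a := by
  have hmn : 0 < 4 * m * n := by positivity
  have h_inv : a ^ (1 - 4 * (m : ℤ) * n) = 1 := by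
    exact_mod_cast zpow_one_sub_natCast_eq_one hmn ha
  rw [h_inv]
  unfold delta
  rw [Nat.sub_add_cancel hm, Nat.sub_add_cancel hn, Nat.sub_add_cancel hmn]
  calc (a ^ m + 1) * (a ^ (2 * m * n) + 1) * (∑ i ∈ range m, a ^ i) *
        ∑ j ∈ range n, (a ^ (2 * m)) ^ j
      = ((∑ i ∈ range m, a ^ i) * (a ^ m + 1)) * (∑ j ∈ range n, (a ^ (2 * m)) ^ j) *
          (a ^ (2 * m * n) + 1) := by ring
    _ = ∑ i ∈ range (2 * (2 * m * n)), a ^ i := by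
      rw [geom_sum_mul_pow_add_one, geom_sum_mul_geom_sum_pow, geom_sum_mul_pow_add_one]
    _ = ∑ i ∈ range (4 * m * n), a ^ i := by ring_nf
end

section
/- Let M ∈ SL(2,ℂ) be the matrix [[0,1],[−1,0]] (eigenvalues ±i). Then for the 2N-dimensional irreducible representation σ_{2N} of SL(2,ℂ), det(σ_{2N}(M) − I) = 2^N. -/
open Complex

/-! The eigenvalue `z = I ^ m` (`m` odd) satisfies `z⁻¹ = -z`, since `I ^ (-2 * m) = (-1) ^ m = -1`;
hence `(z - 1) * (z⁻¹ - 1) = 2 - (z + z⁻¹) = 2` and every one of the `N` factors equals `2`. -/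

lemma sub_one_mul_inv_sub_one {K : Type*} [Field K] {z : K} (hz : z ≠ 0) :
    (z - 1) * (z⁻¹ - 1) = 2 - (z + z⁻¹) := by
  field_simp
  ring

lemma Complex.I_zpow_neg_of_odd {m : ℤ} (hm : Odd m) : I ^ (-m) = -I ^ m := by
  calc I ^ (-m) = I ^ m * (I ^ 2) ^ (-m) := by
        rw [← zpow_natCast, ← zpow_mul, ← zpow_add₀ I_ne_zero]; congr 1; push_cast; ring
    _ = -I ^ m := by rw [I_sq, hm.neg.neg_one_zpow, mul_neg_one]

lemma Complex.I_zpow_sub_one_mul_I_zpow_neg_sub_one {m : ℤ} (hm : Odd m) :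
    (I ^ m - 1) * (I ^ (-m) - 1) = 2 := by
  rw [zpow_neg, sub_one_mul_inv_sub_one (zpow_ne_zero m I_ne_zero), ← zpow_neg,
    I_zpow_neg_of_odd hm, add_neg_cancel, sub_zero]

/-- `M = [[0,1],[-1,0]] ∈ SL(2,ℂ)` has eigenvalues `±i`, so `σ_{2N}(M)` has eigenvalues
`i^{±(2j-1)}` for `j = 1, …, N`, and `det (σ_{2N}(M) - 1) = ∏_{j=1}^N
(i^(2j-1) - 1)(i^(-(2j-1)) - 1) = 2^N`. -/
theorem det_sigma2N_rotation_sub_one (N : ℕ) :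
    ∏ j ∈ Finset.Icc 1 N,
        ((I ^ (2 * j - 1) - 1) * (I ^ (-(2 * (j : ℤ) - 1)) - 1)) = 2 ^ N := by
  have factor_eq_two : ∀ j ∈ Finset.Icc 1 N,
      (I ^ (2 * j - 1) - 1) * (I ^ (-(2 * (j : ℤ) - 1)) - 1) = 2 := by
    intro j hj
    have hj : 1 ≤ j := (Finset.mem_Icc.mp hj).1
    have hcast : ((2 * j - 1 : ℕ) : ℤ) = 2 * (j : ℤ) - 1 := by omega
    rw [← zpow_natCast, hcast]
    exact I_zpow_sub_one_mul_I_zpow_neg_sub_one ⟨j - 1, by ring⟩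
  rw [Finset.prod_congr rfl factor_eq_two, Finset.prod_const, Nat.card_Icc, Nat.add_sub_cancel]
end
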